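/- arXiv:math/0510271 — 5 statements merged into one kernel-verified Lean document; each statement's English description precedes it below -/
import Mathlib

section
/- For all real numbers a and x and every λ > 0, setting x̃ = x·1{|x| ≥ λ} (hard thresholding of x at level λ), one has (a − x̃)² ≤ 5·(a − x)²·1{|a| ≥ λ/2} + (a − x)²·1{|a − x| ≥ λ/2} + a²·1{|a| < 2λ}. -/
/-!
If `|x| ≥ λ` the thresholded value is `x` and the error is `(a - x)²`: it is covered by the first
term when `|a| ≥ λ/2`, and otherwise `|a - x| ≥ |x| - |a| > λ/2` so the second term covers it.
If `|x| < λ` the error is `a²`: the third term covers it when `|a| < 2λ`, and otherwise `x` is at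
most half of `a` in absolute value, so `a² ≤ 4(a - x)²` while both indicators of the other terms fire.
-/

lemma abs_le_two_mul_abs_sub_of_two_mul_abs_le {a x : ℝ} (h : 2 * |x| ≤ |a|) :
    |a| ≤ 2 * |a - x| := by
  linarith [abs_sub_abs_le_abs_sub a x]

lemma sq_le_four_mul_sq_sub_of_two_mul_abs_le {a x : ℝ} (h : 2 * |x| ≤ |a|) :
    a ^ 2 ≤ 4 * (a - x) ^ 2 := by
  have key : |a| ≤ |2 * (a - x)| := by
    rw [abs_mul, abs_two]
    exact abs_le_two_mul_abs_sub_of_two_mul_abs_le h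
  calc a ^ 2 ≤ (2 * (a - x)) ^ 2 := sq_le_sq.mpr key
    _ = 4 * (a - x) ^ 2 := by ring

theorem hard_threshold_pointwise_general (a x lam : ℝ) :
    (a - x * (if lam ≤ |x| then 1 else 0)) ^ 2 ≤
      5 * (a - x) ^ 2 * (if lam / 2 ≤ |a| then 1 else 0)
        + (a - x) ^ 2 * (if lam / 2 ≤ |a - x| then 1 else 0)
        + a ^ 2 * (if |a| < 2 * lam then 1 else 0) := by
  have h₁ : 0 ≤ 5 * (a - x) ^ 2 * (if lam / 2 ≤ |a| then 1 else 0) := by positivity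
  have h₂ : 0 ≤ (a - x) ^ 2 * (if lam / 2 ≤ |a - x| then 1 else 0) := by positivity
  have h₃ : 0 ≤ a ^ 2 * (if |a| < 2 * lam then 1 else 0) := by positivity
  have habs : |x| - |a| ≤ |a - x| := abs_sub_comm x a ▸ abs_sub_abs_le_abs_sub x a
  by_cases hx : lam ≤ |x|
  · rw [if_pos hx, mul_one]
    by_cases ha : lam / 2 ≤ |a|
    · rw [if_pos ha]
      linarith [sq_nonneg (a - x)]
    · rw [if_pos (by linarith : lam / 2 ≤ |a - x|)]
      linarith
  · rw [if_neg hx, mul_zero, sub_zero]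
    by_cases ha : |a| < 2 * lam
    · rw [if_pos ha]
      linarith
    · rw [not_le] at hx
      rw [not_lt] at ha
      have hlam : 0 < lam := (abs_nonneg x).trans_lt hx
      have hxa : 2 * |x| ≤ |a| := by linarith
      have hax : lam / 2 ≤ |a - x| := by
        linarith [abs_le_two_mul_abs_sub_of_two_mul_abs_le hxa]
      rw [if_pos (by linarith : lam / 2 ≤ |a|), if_pos hax]
      linarith [sq_le_four_mul_sq_sub_of_two_mul_abs_le hxa, sq_nonneg (a - x)]

/-- **Pointwise hard-thresholding inequality.**
For all reals `a`, `x` and every `λ > 0`, with `x̃ = x·1{|x| ≥ λ}` the hard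
thresholding of `x` at level `λ`,
`(a − x̃)² ≤ 5·(a−x)²·1{|a| ≥ λ/2} + (a−x)²·1{|a−x| ≥ λ/2} + a²·1{|a| < 2λ}`. -/
theorem hard_threshold_pointwise (a x lam : ℝ) (hlam : 0 < lam) :
    (a - x * (if lam ≤ |x| then 1 else 0)) ^ 2 ≤
      5 * (a - x) ^ 2 * (if lam / 2 ≤ |a| then 1 else 0)
        + (a - x) ^ 2 * (if lam / 2 ≤ |a - x| then 1 else 0)
        + a ^ 2 * (if |a| < 2 * lam then 1 else 0) :=
  hard_threshold_pointwise_general a x lam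
end

section
/- Let H be a real (separable) Hilbert space and let ξ_1,…,ξ_n be independent H-valued integrable random variables such that ‖ξ_i − E ξ_i‖ ≤ M̃ almost surely for every i, for some constant M̃ > 0. Then for every λ > 0, P( ‖(1/n)·Σ_{i=1}^n (ξ_i − E ξ_i)‖ ≥ λ ) ≤ 2·exp( −3·n·λ² / (8·M̃²) ). -/
/-!
If `X` is a centred `H`-valued random variable with `‖X‖ ≤ b`, then
`E cosh ‖v + X‖ ≤ cosh ‖v‖ cosh b` for every `v`. Indeed `‖v + x‖² ≤ ‖v‖² + 2⟪v, x⟫ + b²` is an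
affine function of `⟪v, x⟫ ∈ [-‖v‖b, ‖v‖b]` running from `(‖v‖ - b)²` to `(‖v‖ + b)²`, and
`u ↦ cosh √u` is convex, so `cosh ‖v + x‖` lies below a chord that is affine in `⟪v, x⟫`; its mean
is `cosh ‖v‖ cosh b`. By independence and Fubini, `E cosh (t ‖X₁ + ⋯ + Xₙ‖) ≤ cosh (tb)ⁿ ≤
exp (n t² b² / 2)`, and Markov's inequality with `t = r / (n b²)` gives
`P (‖X₁ + ⋯ + Xₙ‖ ≥ r) ≤ 2 exp (-r² / (2 n b²))`. Taking `r = nλ` yields the claim, even with `1/2`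
in place of `3/8`.
-/

open MeasureTheory ProbabilityTheory Real Set RealInnerProductSpace

namespace Real

theorem convexOn_sinh : ConvexOn ℝ (Ici 0) sinh := by
  refine MonotoneOn.convexOn_of_deriv (convex_Ici 0) continuous_sinh.continuousOn
    differentiable_sinh.differentiableOn ?_
  rw [deriv_sinh]
  exact cosh_strictMonoOn.monotoneOn.mono interior_subset

theorem monotoneOn_sinh_div_self : MonotoneOn (fun x => sinh x / x) (Ioi 0) := by
  have h := convexOn_sinh.slope_mono self_mem_Ici
  rw [Ici_sdiff_left] at h
  have hslope : slope sinh 0 = fun x => sinh x / x := by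
    funext x
    simp only [slope_def_field, sinh_zero, sub_zero]
  rwa [hslope] at h

theorem convexOn_cosh_sqrt : ConvexOn ℝ (Ici 0) (fun u => cosh √u) := by
  have hderiv : ∀ u ∈ Ioi (0 : ℝ), HasDerivAt (fun u => cosh √u) (sinh √u / √u / 2) u := by
    intro u hu
    exact ((hasDerivAt_cosh √u).comp u (hasDerivAt_sqrt hu.ne')).congr_deriv (by ring)
  rw [← interior_Ici] at hderiv
  refine MonotoneOn.convexOn_of_deriv (convex_Ici 0)
    (continuous_cosh.comp continuous_sqrt).continuousOn
    (fun u hu => (hderiv u hu).differentiableAt.differentiableWithinAt) ?_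
  intro u hu w hw huw
  rw [(hderiv u hu).deriv, (hderiv w hw).deriv]
  rw [interior_Ici] at hu hw
  exact div_le_div_of_nonneg_right
    (monotoneOn_sinh_div_self (sqrt_pos.2 hu) (sqrt_pos.2 hw) (sqrt_le_sqrt huw)) zero_le_two

theorem cosh_sqrt_sq (x : ℝ) : cosh √(x ^ 2) = cosh x := by
  rw [sqrt_sq_eq_abs, cosh_abs]

theorem cosh_pow_div_cosh_le (n : ℕ) (b r t : ℝ) :
    cosh (t * b) ^ n / cosh (t * r) ≤ 2 * exp (n * (t * b) ^ 2 / 2 - t * r) := by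
  have hcosh : exp (t * r) / 2 ≤ cosh (t * r) := by
    rw [cosh_eq]
    linarith [exp_pos (-(t * r))]
  calc cosh (t * b) ^ n / cosh (t * r) ≤ exp ((t * b) ^ 2 / 2) ^ n / (exp (t * r) / 2) :=
        div_le_div₀ (by positivity) (pow_le_pow_left₀ (cosh_pos _).le (cosh_le_exp_half_sq _) n)
          (by positivity) hcosh
    _ = 2 * exp (n * (t * b) ^ 2 / 2 - t * r) := by
        rw [← exp_nat_mul, exp_sub]
        field_simp

end Real

theorem cosh_norm_add_le_of_norm_le {H : Type*} [NormedAddCommGroup H] [InnerProductSpace ℝ H]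
    (v x : H) {b : ℝ} (hx : ‖x‖ ≤ b) :
    cosh ‖v + x‖ ≤ cosh ‖v‖ * cosh b + sinh ‖v‖ * sinh b / (‖v‖ * b) * ⟪v, x⟫ := by
  have hb : 0 ≤ b := (norm_nonneg x).trans hx
  rcases (mul_nonneg (norm_nonneg v) hb).eq_or_lt with hvb | hvb
  · have hsinh : sinh ‖v‖ * sinh b = 0 := by
      rcases mul_eq_zero.1 hvb.symm with h | h <;> simp [h]
    rw [← hvb, div_zero, zero_mul, add_zero]
    calc cosh ‖v + x‖ ≤ cosh (‖v‖ + b) :=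
          cosh_strictMonoOn.monotoneOn (norm_nonneg _) (add_nonneg (norm_nonneg v) hb)
            ((norm_add_le v x).trans (by linarith))
      _ = cosh ‖v‖ * cosh b := by rw [cosh_add, hsinh, add_zero]
  · set A := ‖v‖
    set s := ⟪v, x⟫
    obtain ⟨hA, hb0⟩ := mul_ne_zero_iff.1 hvb.ne'
    have hs : |s| ≤ A * b := (abs_real_inner_le_norm v x).trans (by gcongr)
    set θ := (s + A * b) / (2 * (A * b)) with hθ
    have hθ0 : 0 ≤ θ := div_nonneg (by linarith [neg_abs_le s]) (by linarith)
    have hθ1 : θ ≤ 1 := (div_le_one (by linarith)).2 (by linarith [le_abs_self s])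
    have hsq : ‖v + x‖ ^ 2 ≤ (1 - θ) * (A - b) ^ 2 + θ * (A + b) ^ 2 := by
      have hchord : (1 - θ) * (A - b) ^ 2 + θ * (A + b) ^ 2 = A ^ 2 + 2 * s + b ^ 2 := by
        rw [hθ]
        field_simp
        ring
      rw [hchord, norm_add_sq_real]
      gcongr
    calc cosh ‖v + x‖ = cosh √(‖v + x‖ ^ 2) := (cosh_sqrt_sq _).symm
      _ ≤ cosh √((1 - θ) * (A - b) ^ 2 + θ * (A + b) ^ 2) :=
          cosh_strictMonoOn.monotoneOn (sqrt_nonneg _) (sqrt_nonneg _) (sqrt_le_sqrt hsq)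
      _ ≤ (1 - θ) * cosh √((A - b) ^ 2) + θ * cosh √((A + b) ^ 2) :=
          convexOn_cosh_sqrt.2 (mem_Ici.2 (sq_nonneg _)) (mem_Ici.2 (sq_nonneg _)) (by linarith)
            hθ0 (by ring)
      _ = cosh A * cosh b + sinh A * sinh b / (A * b) * s := by
          rw [cosh_sqrt_sq, cosh_sqrt_sq, cosh_sub, cosh_add, hθ]
          field_simp
          ring

section Concentration

variable {Ω : Type*} [MeasurableSpace Ω] {P : Measure Ω} [IsProbabilityMeasure P]
  {H : Type*} [NormedAddCommGroup H] [InnerProductSpace ℝ H] [CompleteSpace H]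

theorem lintegral_cosh_norm_add_le {Z : Ω → H} (hZm : AEStronglyMeasurable Z P)
    (hZ0 : ∫ ω, Z ω ∂P = 0) {b : ℝ} (hZb : ∀ᵐ ω ∂P, ‖Z ω‖ ≤ b) (v : H) :
    ∫⁻ ω, ENNReal.ofReal (cosh ‖v + Z ω‖) ∂P ≤ ENNReal.ofReal (cosh ‖v‖ * cosh b) := by
  set K := sinh ‖v‖ * sinh b / (‖v‖ * b)
  have hchord : ∀ᵐ ω ∂P, cosh ‖v + Z ω‖ ≤ cosh ‖v‖ * cosh b + K * ⟪v, Z ω⟫ :=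
    hZb.mono fun ω hω => cosh_norm_add_le_of_norm_le v (Z ω) hω
  have hZint : Integrable Z P := .of_bound hZm b hZb
  have hchord_int : Integrable (fun ω => cosh ‖v‖ * cosh b + K * ⟪v, Z ω⟫) P :=
    (integrable_const _).add ((hZint.const_inner v).const_mul K)
  have hcosh_int : Integrable (fun ω => cosh ‖v + Z ω‖) P :=
    hchord_int.mono' (by fun_prop) <| hchord.mono fun ω hω => by
      rwa [norm_of_nonneg (cosh_pos _).le]
  calc ∫⁻ ω, ENNReal.ofReal (cosh ‖v + Z ω‖) ∂P = ENNReal.ofReal (∫ ω, cosh ‖v + Z ω‖ ∂P) :=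
        (ofReal_integral_eq_lintegral_ofReal hcosh_int (ae_of_all _ fun _ => (cosh_pos _).le)).symm
    _ ≤ ENNReal.ofReal (∫ ω, cosh ‖v‖ * cosh b + K * ⟪v, Z ω⟫ ∂P) :=
        ENNReal.ofReal_le_ofReal (integral_mono_ae hcosh_int hchord_int hchord)
    _ = ENNReal.ofReal (cosh ‖v‖ * cosh b) := by
        rw [integral_add (integrable_const _) ((hZint.const_inner v).const_mul K),
          integral_const, integral_const_mul, integral_inner hZint, hZ0, inner_zero_right]
        simp

variable [MeasurableSpace H] [BorelSpace H] [SecondCountableTopology H] {ι : Type*}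

theorem lintegral_cosh_norm_sum_le {X : ι → Ω → H} (hXm : ∀ i, Measurable (X i))
    (hX : iIndepFun X P) (hX0 : ∀ i, ∫ ω, X i ω ∂P = 0) {b : ℝ}
    (hXb : ∀ i, ∀ᵐ ω ∂P, ‖X i ω‖ ≤ b) (s : Finset ι) :
    ∫⁻ ω, ENNReal.ofReal (cosh ‖∑ i ∈ s, X i ω‖) ∂P ≤ ENNReal.ofReal (cosh b) ^ s.card := by
  classical
  have hg : Measurable fun y : H => ENNReal.ofReal (cosh ‖y‖) := by fun_prop
  induction s using Finset.induction_on with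
  | empty => simp
  | insert j s hj ih =>
    set Y := ∑ i ∈ s, X i
    have hYm : Measurable Y := by
      simpa only [Y, ← Finset.sum_apply] using Finset.measurable_sum s fun i _ => hXm i
    have hlaw : P.map (fun ω => (Y ω, X j ω)) = (P.map Y).prod (P.map (X j)) :=
      (indepFun_iff_map_prod_eq_prod_map_map hYm.aemeasurable (hXm j).aemeasurable).1
        (hX.indepFun_finsetSum_of_notMem hXm hj)
    have hstep : ∀ y, ∫⁻ z, ENNReal.ofReal (cosh ‖y + z‖) ∂(P.map (X j))
        ≤ ENNReal.ofReal (cosh ‖y‖) * ENNReal.ofReal (cosh b) := fun y => by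
      rw [lintegral_map (by fun_prop) (hXm j), ← ENNReal.ofReal_mul (cosh_pos _).le]
      exact lintegral_cosh_norm_add_le (hXm j).aestronglyMeasurable (hX0 j) (hXb j) y
    calc ∫⁻ ω, ENNReal.ofReal (cosh ‖∑ i ∈ insert j s, X i ω‖) ∂P
        = ∫⁻ ω, ENNReal.ofReal (cosh ‖Y ω + X j ω‖) ∂P := by
          simp only [Finset.sum_insert hj, Y, Finset.sum_apply, add_comm]
      _ = ∫⁻ y, ∫⁻ z, ENNReal.ofReal (cosh ‖y + z‖) ∂(P.map (X j)) ∂(P.map Y) := by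
          rw [← lintegral_prod (fun p : H × H => ENNReal.ofReal (cosh ‖p.1 + p.2‖)) (by fun_prop),
            ← hlaw, lintegral_map (by fun_prop) (by fun_prop)]
      _ ≤ ∫⁻ y, ENNReal.ofReal (cosh ‖y‖) * ENNReal.ofReal (cosh b) ∂(P.map Y) :=
          lintegral_mono hstep
      _ = (∫⁻ ω, ENNReal.ofReal (cosh ‖Y ω‖) ∂P) * ENNReal.ofReal (cosh b) := by
          rw [lintegral_mul_const _ hg, lintegral_map hg hYm]
      _ ≤ ENNReal.ofReal (cosh b) ^ (insert j s).card := by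
          rw [Finset.card_insert_of_notMem hj, pow_succ]
          gcongr
          simpa only [Y, Finset.sum_apply] using ih

theorem measure_le_norm_sum_le_two_mul_exp [Fintype ι] {X : ι → Ω → H}
    (hXm : ∀ i, Measurable (X i)) (hX : iIndepFun X P) (hX0 : ∀ i, ∫ ω, X i ω ∂P = 0) {b : ℝ}
    (hXb : ∀ i, ∀ᵐ ω ∂P, ‖X i ω‖ ≤ b) {r : ℝ} (hr : 0 ≤ r) :
    P {ω | r ≤ ‖∑ i, X i ω‖} ≤
      ENNReal.ofReal (2 * exp (-r ^ 2 / (2 * Fintype.card ι * b ^ 2))) := by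
  set n := Fintype.card ι
  set t := r / (n * b ^ 2) with ht_def
  have ht : 0 ≤ t := by positivity
  have hmgf :
      ∫⁻ ω, ENNReal.ofReal (cosh ‖∑ i, t • X i ω‖) ∂P ≤ ENNReal.ofReal (cosh (t * b)) ^ n :=
    lintegral_cosh_norm_sum_le (X := fun i => t • X i) (fun i => (hXm i).const_smul t)
      (hX.comp (fun _ => (t • ·)) fun _ => measurable_const_smul t)
      (fun i => by simp only [Pi.smul_apply, integral_smul, hX0, smul_zero])
      (fun i => (hXb i).mono fun ω hω => by
        rw [Pi.smul_apply, norm_smul, norm_of_nonneg ht]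
        gcongr) _
  have hexponent : n * (t * b) ^ 2 / 2 - t * r = -r ^ 2 / (2 * n * b ^ 2) := by
    rcases eq_or_ne ((n : ℝ) * b ^ 2) 0 with h | h
    · simp [t, h, mul_assoc]
    · obtain ⟨hn, hb⟩ := mul_ne_zero_iff.1 h
      rw [ht_def]
      field_simp
      ring
  calc P {ω | r ≤ ‖∑ i, X i ω‖}
      ≤ P {ω | ENNReal.ofReal (cosh (t * r)) ≤ ENNReal.ofReal (cosh ‖∑ i, t • X i ω‖)} := by
        refine measure_mono fun ω hω => ENNReal.ofReal_le_ofReal ?_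
        rw [← Finset.smul_sum, norm_smul, norm_of_nonneg ht]
        exact cosh_strictMonoOn.monotoneOn (mem_Ici.2 (mul_nonneg ht hr))
          (mem_Ici.2 (mul_nonneg ht (norm_nonneg _)))
          (mul_le_mul_of_nonneg_left hω ht)
    _ ≤ (∫⁻ ω, ENNReal.ofReal (cosh ‖∑ i, t • X i ω‖) ∂P) / ENNReal.ofReal (cosh (t * r)) :=
        meas_ge_le_lintegral_div (by fun_prop) (by simp [cosh_pos]) ENNReal.ofReal_ne_top
    _ ≤ ENNReal.ofReal (cosh (t * b)) ^ n / ENNReal.ofReal (cosh (t * r)) := by gcongr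
    _ = ENNReal.ofReal (cosh (t * b) ^ n / cosh (t * r)) := by
        rw [ENNReal.ofReal_div_of_pos (cosh_pos _), ENNReal.ofReal_pow (cosh_pos _).le]
    _ ≤ ENNReal.ofReal (2 * exp (-r ^ 2 / (2 * n * b ^ 2))) :=
        ENNReal.ofReal_le_ofReal (hexponent ▸ cosh_pow_div_cosh_le n b r t)

end Concentration

theorem pinelis_bounded_concentration_general
    {Ω : Type*} [MeasurableSpace Ω] (P : Measure Ω) [IsProbabilityMeasure P]
    {H : Type*} [NormedAddCommGroup H] [InnerProductSpace ℝ H] [CompleteSpace H]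
    [MeasurableSpace H] [BorelSpace H] [SecondCountableTopology H]
    (n : ℕ) (ξ : Fin n → Ω → H)
    (hmeas : ∀ i, Measurable (ξ i))
    (hindep : iIndepFun ξ P)
    (hint : ∀ i, Integrable (ξ i) P)
    (Mt : ℝ)
    (hbdd : ∀ i, ∀ᵐ ω ∂P, ‖ξ i ω - ∫ ω', ξ i ω' ∂P‖ ≤ Mt) :
    ∀ lam : ℝ, 0 < lam →
      P {ω | lam ≤ ‖(1 / (n : ℝ)) • ∑ i, (ξ i ω - ∫ ω', ξ i ω' ∂P)‖} ≤
        ENNReal.ofReal (2 * Real.exp (-3 * n * lam ^ 2 / (8 * Mt ^ 2))) := by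
  intro lam hlam
  rcases Nat.eq_zero_or_pos n with rfl | hn
  · simp [not_le.2 hlam]
  set X : Fin n → Ω → H := fun i ω => ξ i ω - ∫ ω', ξ i ω' ∂P
  have htail := measure_le_norm_sum_le_two_mul_exp (X := X) (fun i => (hmeas i).sub_const _)
    (hindep.comp _ fun i => measurable_id.sub_const (∫ ω', ξ i ω' ∂P))
    (fun i => by simp [X, integral_sub (hint i) (integrable_const _)]) hbdd
    (r := n * lam) (by positivity)
  rw [Fintype.card_fin] at htail
  have hmean : {ω | lam ≤ ‖(1 / (n : ℝ)) • ∑ i, X i ω‖} ⊆ {ω | n * lam ≤ ‖∑ i, X i ω‖} := by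
    intro ω hω
    simp only [mem_ofPred_eq, norm_smul, one_div, norm_inv, Real.norm_natCast] at hω ⊢
    rwa [inv_mul_eq_div, le_div_iff₀ (by positivity), mul_comm] at hω
  have hexponent : -(n * lam) ^ 2 / (2 * n * Mt ^ 2) ≤ -3 * n * lam ^ 2 / (8 * Mt ^ 2) := by
    rw [show -((n : ℝ) * lam) ^ 2 / (2 * n * Mt ^ 2) = -4 * n * lam ^ 2 / (8 * Mt ^ 2) by
      field_simp; ring]
    gcongr
    nlinarith
  calc _ ≤ P {ω | n * lam ≤ ‖∑ i, X i ω‖} := measure_mono hmean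
    _ ≤ _ := htail
    _ ≤ _ := ENNReal.ofReal_le_ofReal (by gcongr)

/-- **Concentration for bounded Hilbert-space-valued variables (from Pinelis'
inequality).** If `ξ_1, …, ξ_n` are independent integrable `H`-valued random
variables with `‖ξ_i − E ξ_i‖ ≤ M̃` almost surely, then for every `λ > 0`,
`P(‖(1/n)·∑ (ξ_i − E ξ_i)‖ ≥ λ) ≤ 2·exp(−3·n·λ²/(8·M̃²))`. -/
theorem pinelis_bounded_concentration
    {Ω : Type*} [MeasurableSpace Ω] (P : Measure Ω) [IsProbabilityMeasure P]
    {H : Type*} [NormedAddCommGroup H] [InnerProductSpace ℝ H] [CompleteSpace H]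
    [MeasurableSpace H] [BorelSpace H] [SecondCountableTopology H]
    (n : ℕ) (hn : 1 ≤ n) (ξ : Fin n → Ω → H)
    (hmeas : ∀ i, Measurable (ξ i))
    (hindep : iIndepFun ξ P)
    (hint : ∀ i, Integrable (ξ i) P)
    (Mt : ℝ) (hMt : 0 < Mt)
    (hbdd : ∀ i, ∀ᵐ ω ∂P, ‖ξ i ω - ∫ ω', ξ i ω' ∂P‖ ≤ Mt) :
    ∀ lam : ℝ, 0 < lam →
      P {ω | lam ≤ ‖(1 / (n : ℝ)) • ∑ i, (ξ i ω - ∫ ω', ξ i ω' ∂P)‖} ≤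
        ENNReal.ofReal (2 * Real.exp (-3 * n * lam ^ 2 / (8 * Mt ^ 2))) :=
  pinelis_bounded_concentration_general P n ξ hmeas hindep hint Mt hbdd
end

section
/- Fix N ∈ ℕ, c_ψ > 0, j ∈ ℕ, and let ψ_{j,k} : ℝ → ℝ be a continuously differentiable function whose support is contained in an interval of length N·2^{−j} and such that ‖ψ_{j,k}‖_∞ ≤ c_ψ·2^{j/2}. Then for every r ≥ 1 and every n ≥ 1, there exist constants τ_r, τ'_r > 0, depending only on N, r and c_ψ, such that (1/n)·Σ_{i=1}^n |ψ_{j,k}(i/n)|^r ≤ τ_r·2^{j(r/2 − 1)} + τ'_r·2^{j(1 + r/2)}/n. -/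
open scoped BigOperators

/-- **Riemann-sum moment bound for wavelet-type functions.**
If `ψ` is continuously differentiable, supported in an interval of length
`N·2^{−j}` and `‖ψ‖_∞ ≤ c_ψ·2^{j/2}`, then for every `r ≥ 1` and `n ≥ 1`,
`(1/n)·∑_{i=1}^n |ψ(i/n)|^r ≤ τ_r·2^{j(r/2−1)} + τ'_r·2^{j(1+r/2)}/n`,
with constants `τ_r, τ'_r` depending only on `N`, `r` and `c_ψ`. -/
theorem riemann_sum_moment_bound (N : ℕ) (cψ : ℝ) (hcψ : 0 < cψ) (r : ℝ) (hr : 1 ≤ r) :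
    ∃ τ τ' : ℝ, 0 < τ ∧ 0 < τ' ∧
      ∀ (j : ℕ) (ψ : ℝ → ℝ), ContDiff ℝ 1 ψ →
        (∃ a : ℝ, ∀ x : ℝ, ψ x ≠ 0 → x ∈ Set.Icc a (a + (N : ℝ) * (2 : ℝ) ^ (-(j : ℝ)))) →
        (∀ x : ℝ, |ψ x| ≤ cψ * (2 : ℝ) ^ ((j : ℝ) / 2)) →
        ∀ n : ℕ, 1 ≤ n →
          (1 / (n : ℝ)) * ∑ i : Fin n, |ψ (((i : ℕ) + 1) / (n : ℝ))| ^ r ≤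
            τ * (2 : ℝ) ^ ((j : ℝ) * (r / 2 - 1)) +
              τ' * (2 : ℝ) ^ ((j : ℝ) * (1 + r / 2)) / (n : ℝ) := by
  have hr0 : (0:ℝ) < r := lt_of_lt_of_le one_pos hr
  refine ⟨((N:ℝ)+1) * cψ ^ r, cψ ^ r, by positivity, by positivity, ?_⟩
  rintro j ψ - ⟨a, ha⟩ hbound n hn
  have hn0 : (0:ℝ) < n := by exact_mod_cast hn
  set L : ℝ := (N : ℝ) * (2:ℝ) ^ (-(j:ℝ)) with hLdef
  have hL0 : 0 ≤ L := by positivity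
  set B : ℝ := cψ * (2:ℝ) ^ ((j:ℝ)/2) with hBdef
  have hB : 0 < B := by positivity
  set S : Finset (Fin n) := Finset.univ.filter (fun i => ψ (((i:ℕ)+1)/(n:ℝ)) ≠ 0) with hS
  have hsum : ∑ i ∈ S, |ψ (((i:ℕ)+1)/(n:ℝ))| ^ r
      = ∑ i : Fin n, |ψ (((i:ℕ)+1)/(n:ℝ))| ^ r := by
    apply Finset.sum_filter_of_ne
    intro i _ hf hψ0
    apply hf
    rw [hψ0, abs_zero, Real.zero_rpow hr0.ne']
  have hcard : (S.card : ℝ) ≤ (n:ℝ) * L + 1 := by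
    have hsub : ∀ i ∈ S, ((i:ℤ)+1) ∈ Finset.Icc ⌈(n:ℝ)*a⌉ ⌊(n:ℝ)*(a+L)⌋ := by
      intro i hi
      rw [hS, Finset.mem_filter] at hi
      have hmem := ha _ hi.2
      have h1 : a ≤ (((i:ℕ):ℝ)+1)/(n:ℝ) := hmem.1
      have h2 : (((i:ℕ):ℝ)+1)/(n:ℝ) ≤ a + L := hmem.2
      rw [Finset.mem_Icc]
      constructor
      · rw [Int.ceil_le]
        push_cast
        have := (le_div_iff₀ hn0).mp h1
        linarith
      · rw [Int.le_floor]
        push_cast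
        have := (div_le_iff₀ hn0).mp h2
        linarith
    have hinj : Set.InjOn (fun i : Fin n => (i:ℤ)+1) S := by
      intro x _ y _ h
      simp only [add_left_inj, Nat.cast_inj] at h
      exact Fin.ext h
    have h1 : S.card ≤ (Finset.Icc ⌈(n:ℝ)*a⌉ ⌊(n:ℝ)*(a+L)⌋).card :=
      Finset.card_le_card_of_injOn _ hsub hinj
    have h2 : ((Finset.Icc ⌈(n:ℝ)*a⌉ ⌊(n:ℝ)*(a+L)⌋).card : ℝ) ≤ (n:ℝ)*L + 1 := by
      rw [Int.card_Icc]
      have hcast : (((⌊(n:ℝ)*(a+L)⌋ + 1 - ⌈(n:ℝ)*a⌉).toNat : ℕ) : ℝ)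
          = max ((⌊(n:ℝ)*(a+L)⌋ : ℝ) + 1 - (⌈(n:ℝ)*a⌉ : ℝ)) 0 := by
        have := Int.toNat_eq_max (⌊(n:ℝ)*(a+L)⌋ + 1 - ⌈(n:ℝ)*a⌉)
        have := congrArg (fun z : ℤ => (z : ℝ)) this
        push_cast at this
        convert this using 2 <;> push_cast <;> ring
      rw [hcast]
      apply max_le
      · have hf : (⌊(n:ℝ)*(a+L)⌋ : ℝ) ≤ (n:ℝ)*(a+L) := Int.floor_le _
        have hc : (n:ℝ)*a ≤ (⌈(n:ℝ)*a⌉ : ℝ) := Int.le_ceil _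
        nlinarith
      · positivity
    calc (S.card : ℝ) ≤ _ := by exact_mod_cast h1
      _ ≤ (n:ℝ)*L + 1 := h2
  have hterm : ∀ i ∈ S, |ψ (((i:ℕ)+1)/(n:ℝ))| ^ r ≤ B ^ r := fun i _ =>
    Real.rpow_le_rpow (abs_nonneg _) (hbound _) hr0.le
  have key : ∑ i : Fin n, |ψ (((i:ℕ)+1)/(n:ℝ))| ^ r ≤ ((n:ℝ)*L + 1) * B^r := by
    rw [← hsum]
    calc ∑ i ∈ S, |ψ (((i:ℕ)+1)/(n:ℝ))| ^ r ≤ S.card • B^r :=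
          Finset.sum_le_card_nsmul _ _ _ hterm
      _ = (S.card : ℝ) * B^r := nsmul_eq_mul _ _
      _ ≤ ((n:ℝ)*L + 1) * B^r :=
          mul_le_mul_of_nonneg_right hcard (by positivity)
  have hBr : B ^ r = cψ ^ r * (2:ℝ) ^ ((j:ℝ) * (r/2)) := by
    rw [hBdef, Real.mul_rpow hcψ.le (by positivity),
      ← Real.rpow_mul (by norm_num : (0:ℝ) ≤ 2)]
    ring_nf
  have h1 : (2:ℝ) ^ (-(j:ℝ)) * (2:ℝ) ^ ((j:ℝ) * (r/2)) = (2:ℝ) ^ ((j:ℝ)*(r/2-1)) := by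
    rw [← Real.rpow_add (by norm_num : (0:ℝ) < 2)]
    congr 1
    ring
  have expand : ((n:ℝ)*L + 1) * B^r / n
      = (N:ℝ) * cψ^r * (2:ℝ) ^ ((j:ℝ)*(r/2-1)) + cψ^r * (2:ℝ)^((j:ℝ)*(r/2)) / n := by
    rw [hBr, hLdef, ← h1]
    field_simp
  have step : (1/(n:ℝ)) * ∑ i : Fin n, |ψ (((i:ℕ)+1)/(n:ℝ))| ^ r
      ≤ ((n:ℝ)*L + 1) * B^r / n := by
    rw [one_div, inv_mul_eq_div]
    gcongr
  refine step.trans ?_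
  rw [expand]
  have hmono : (2:ℝ)^((j:ℝ)*(r/2)) ≤ (2:ℝ)^((j:ℝ)*(1+r/2)) := by
    apply Real.rpow_le_rpow_of_exponent_le (by norm_num)
    have : (0:ℝ) ≤ (j:ℝ) := Nat.cast_nonneg _
    nlinarith
  have h2 : cψ^r * (2:ℝ)^((j:ℝ)*(r/2)) / n ≤ cψ^r * (2:ℝ)^((j:ℝ)*(1+r/2)) / n := by
    gcongr
  have h3 : (N:ℝ) * cψ^r * (2:ℝ)^((j:ℝ)*(r/2-1))
      ≤ ((N:ℝ)+1) * cψ^r * (2:ℝ)^((j:ℝ)*(r/2-1)) := by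
    have : (0:ℝ) ≤ cψ^r * (2:ℝ)^((j:ℝ)*(r/2-1)) := by positivity
    nlinarith
  calc _ ≤ _ := add_le_add h3 h2
end

section
/- Let s ≥ 1/2, M > 0, λ > 0, and integers j_0 ≤ j* ≤ J. Let (β_{j,k})_{j_0 ≤ j ≤ J, 0 ≤ k < 2^j} be real numbers with |β_{j,k}| ≤ M·2^{−j(s + 1/2)} for all j, k in this range. Then Σ_{j = j_0}^{J} Σ_{0 ≤ k < 2^j} β_{j,k}²·1{|β_{j,k}| < 2λ} ≤ 8·2^{j*}·λ² + 2·M²·2^{−2 j* s}. -/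
/-!
On a level `j ≤ j*` each of the `2^j` retained coefficients satisfies `β² < 4λ²`, and
`∑_{j ≤ j*} 2^j ≤ 2·2^{j*}`. On a level `j > j*` the decay bound gives
`2^j·M²·2^{-j(2s+1)} = M² r^j` with `r = 2^{-2s} ≤ 1/2` (this is where `s ≥ 1/2` enters), and the
geometric tail is at most `2 r^{j*}`.
-/

open Finset

lemma sq_mul_indicator_abs_lt_le_sq (x t : ℝ) :
    x ^ 2 * (if |x| < t then 1 else 0) ≤ t ^ 2 := by
  split_ifs with h
  · rw [mul_one, ← sq_abs]
    exact pow_le_pow_left₀ (abs_nonneg x) h.le 2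
  · rw [mul_zero]
    positivity

lemma sq_mul_indicator_abs_lt_le_sq_self (x t : ℝ) :
    x ^ 2 * (if |x| < t then 1 else 0) ≤ x ^ 2 :=
  mul_le_of_le_one_right (sq_nonneg x) (by split_ifs <;> norm_num)

lemma sum_sq_mul_indicator_abs_lt_le_card_mul {ι : Type*} (s : Finset ι) (f : ι → ℝ) (t : ℝ) :
    ∑ k ∈ s, f k ^ 2 * (if |f k| < t then 1 else 0) ≤ #s * t ^ 2 :=
  (sum_le_sum fun k _ => sq_mul_indicator_abs_lt_le_sq (f k) t).trans_eq (by
    rw [sum_const, nsmul_eq_mul])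

lemma sum_sq_mul_indicator_abs_lt_le_card_mul_of_abs_le {ι : Type*} (s : Finset ι)
    (f : ι → ℝ) (t b : ℝ) (hb : ∀ k ∈ s, |f k| ≤ b) :
    ∑ k ∈ s, f k ^ 2 * (if |f k| < t then 1 else 0) ≤ #s * b ^ 2 := by
  refine (sum_le_sum fun k hk => (sq_mul_indicator_abs_lt_le_sq_self (f k) t).trans ?_).trans_eq
    (by rw [sum_const, nsmul_eq_mul])
  rw [← sq_abs]
  exact pow_le_pow_left₀ (abs_nonneg (f k)) (hb k hk) 2

lemma geom_sum_range_succ_two_le (n : ℕ) : ∑ j ∈ range (n + 1), (2 : ℝ) ^ j ≤ 2 * 2 ^ n := by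
  rw [geom_sum_eq (by norm_num) (n + 1), pow_succ]
  linarith

lemma geom_sum_Ico_le_two_mul_pow {r : ℝ} (hr₀ : 0 ≤ r) (hr : r ≤ 1 / 2) (m n : ℕ) :
    ∑ i ∈ Ico m n, r ^ i ≤ 2 * r ^ m := by
  refine (geom_sum_Ico_le_of_lt_one hr₀ (by linarith)).trans ?_
  rw [div_le_iff₀ (by linarith)]
  nlinarith [pow_nonneg hr₀ m]

lemma two_rpow_neg_two_mul_le_half {s : ℝ} (hs : 1 / 2 ≤ s) : (2 : ℝ) ^ (-2 * s) ≤ 1 / 2 := by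
  calc (2 : ℝ) ^ (-2 * s) ≤ 2 ^ (-1 : ℝ) := Real.rpow_le_rpow_of_exponent_le one_le_two (by linarith)
    _ = 1 / 2 := by norm_num

lemma two_rpow_neg_two_mul_pow (s : ℝ) (j : ℕ) :
    ((2 : ℝ) ^ (-2 * s)) ^ j = (2 : ℝ) ^ (-2 * (j : ℝ) * s) := by
  rw [← Real.rpow_mul_natCast zero_le_two]
  ring_nf

lemma two_pow_mul_sq_two_rpow (s : ℝ) (j : ℕ) :
    (2 : ℝ) ^ j * ((2 : ℝ) ^ (-(j : ℝ) * (s + 1 / 2))) ^ 2 = ((2 : ℝ) ^ (-2 * s)) ^ j := by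
  rw [two_rpow_neg_two_mul_pow, ← Real.rpow_natCast, ← Real.rpow_mul_natCast zero_le_two,
    ← Real.rpow_add two_pos]
  ring_nf

lemma sum_Icc_le_of_le_two_pow_mul_of_le_mul_pow {E : ℕ → ℝ} {c C r : ℝ} (hc : 0 ≤ c)
    (hC : 0 ≤ C) (hr₀ : 0 ≤ r) (hr : r ≤ 1 / 2) {a n N : ℕ}
    (hlow : ∀ j ∈ Icc a N, j ≤ n → E j ≤ 2 ^ j * c)
    (hhigh : ∀ j ∈ Icc a N, n < j → E j ≤ C * r ^ j) :
    ∑ j ∈ Icc a N, E j ≤ 2 * 2 ^ n * c + 2 * C * r ^ n := by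
  rw [← sum_filter_add_sum_filter_not _ (· ≤ n)]
  gcongr ?_ + ?_
  · calc _ ≤ ∑ j ∈ (Icc a N).filter (· ≤ n), (2 : ℝ) ^ j * c :=
          sum_le_sum fun j hj => hlow j (mem_filter.1 hj).1 (mem_filter.1 hj).2
      _ ≤ ∑ j ∈ range (n + 1), (2 : ℝ) ^ j * c := sum_le_sum_of_subset_of_nonneg
          (fun j hj => by simp only [mem_filter, mem_Icc, mem_range] at hj ⊢; omega)
          fun j _ _ => by positivity
      _ ≤ 2 * 2 ^ n * c := by
          rw [← sum_mul]
          exact mul_le_mul_of_nonneg_right (geom_sum_range_succ_two_le n) hc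
  · calc _ ≤ ∑ j ∈ (Icc a N).filter (¬ · ≤ n), C * r ^ j :=
          sum_le_sum fun j hj => hhigh j (mem_filter.1 hj).1 (not_le.1 (mem_filter.1 hj).2)
      _ ≤ ∑ j ∈ Ico n (N + 1), C * r ^ j := sum_le_sum_of_subset_of_nonneg
          (fun j hj => by simp only [mem_filter, mem_Icc, mem_Ico] at hj ⊢; omega)
          fun j _ _ => by positivity
      _ ≤ 2 * C * r ^ n := by
          rw [← mul_sum]
          exact (mul_le_mul_of_nonneg_left (geom_sum_Ico_le_two_mul_pow hr₀ hr n (N + 1))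
            hC).trans_eq (by ring)

theorem small_coefficients_bound_general (s M lam : ℝ) (hs : 1 / 2 ≤ s)
    (j₀ js J : ℕ)
    (β : ℕ → ℕ → ℝ)
    (hβ : ∀ j, j₀ ≤ j → j ≤ J → ∀ k < 2 ^ j,
      |β j k| ≤ M * (2 : ℝ) ^ (-(j : ℝ) * (s + 1 / 2))) :
    ∑ j ∈ Finset.Icc j₀ J, ∑ k ∈ Finset.range (2 ^ j),
        β j k ^ 2 * (if |β j k| < 2 * lam then 1 else 0) ≤
      8 * (2 : ℝ) ^ (js : ℕ) * lam ^ 2 + 2 * M ^ 2 * (2 : ℝ) ^ (-(2 : ℝ) * (js : ℝ) * s) := by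
  refine (sum_Icc_le_of_le_two_pow_mul_of_le_mul_pow (c := (2 * lam) ^ 2) (C := M ^ 2)
    (n := js) (sq_nonneg _) (sq_nonneg _) (by positivity) (two_rpow_neg_two_mul_le_half hs)
    ?low ?high).trans_eq ?_
  case low =>
    intro j _ _
    have := sum_sq_mul_indicator_abs_lt_le_card_mul (range (2 ^ j)) (β j) (2 * lam)
    rwa [card_range, Nat.cast_pow, Nat.cast_ofNat] at this
  case high =>
    intro j hj _
    have := sum_sq_mul_indicator_abs_lt_le_card_mul_of_abs_le (range (2 ^ j)) (β j) (2 * lam) _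
      fun k hk => hβ j (mem_Icc.1 hj).1 (mem_Icc.1 hj).2 k (mem_range.1 hk)
    rwa [card_range, Nat.cast_pow, Nat.cast_ofNat, mul_pow, mul_left_comm,
      two_pow_mul_sq_two_rpow] at this
  rw [two_rpow_neg_two_mul_pow]
  ring

/-- **Small-coefficients bound (term SS).**
If `|β_{j,k}| ≤ M·2^{−j(s+1/2)}` for `j₀ ≤ j ≤ J`, `0 ≤ k < 2^j`, with
`s ≥ 1/2`, then for every `λ > 0` and `j₀ ≤ j* ≤ J`,
`∑_{j=j₀}^J ∑_{k<2^j} β_{j,k}²·1{|β_{j,k}| < 2λ} ≤ 8·2^{j*}·λ² + 2·M²·2^{−2j*s}`. -/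
theorem small_coefficients_bound (s M lam : ℝ) (hs : 1 / 2 ≤ s) (hM : 0 < M)
    (hlam : 0 < lam) (j₀ js J : ℕ) (hj₀ : j₀ ≤ js) (hjs : js ≤ J)
    (β : ℕ → ℕ → ℝ)
    (hβ : ∀ j, j₀ ≤ j → j ≤ J → ∀ k < 2 ^ j,
      |β j k| ≤ M * (2 : ℝ) ^ (-(j : ℝ) * (s + 1 / 2))) :
    ∑ j ∈ Finset.Icc j₀ J, ∑ k ∈ Finset.range (2 ^ j),
        β j k ^ 2 * (if |β j k| < 2 * lam then 1 else 0) ≤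
      8 * (2 : ℝ) ^ (js : ℕ) * lam ^ 2 + 2 * M ^ 2 * (2 : ℝ) ^ (-(2 : ℝ) * (js : ℝ) * s) :=
  small_coefficients_bound_general s M lam hs j₀ js J β hβ
end

section
/- Fix M > 0, N ∈ ℕ, c_ψ > 0 and j_0 ∈ ℕ. Let ε_1,…,ε_n be independent real random variables with E ε_i = 0 and |ε_i| ≤ M almost surely. Let ψ_{j,k} : ℝ → ℝ (j ≥ j_0, 0 ≤ k < 2^j) be a family of continuously differentiable functions such that the support of ψ_{j,k} is contained in an interval of length N·2^{−j} and ‖ψ_{j,k}‖_∞ ≤ c_ψ·2^{j/2}. Set B_{j,k} = (1/n)·Σ_{i=1}^n ε_i·ψ_{j,k}(i/n). Then there exists a constant C > 0, depending only on M, N and c_ψ, such that for every integer j* with j_0 ≤ j* and 2^{j*} ≤ n, and every η ∈ (0, 1], one has P( 2^{j*+1}·sup_{j_0 ≤ j ≤ j*, 0 ≤ k < 2^j} B_{j,k}² ≥ η² ) ≤ 2^{j*+1}·exp( −C·n·η²·2^{−j*} ). -/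
/-!
Each `n · B_{j,k}` is a weighted sum `∑ ε_i ψ_{j,k}(i/n)` of independent centered variables
bounded by `M`, so by Hoeffding's lemma it is sub-Gaussian with variance proxy
`M² ∑ ψ_{j,k}(i/n)²` (Hoeffding's inequality suffices in place of Bernstein's). At most
`n N 2^{-j} + 1` grid points `i/n` meet the support of `ψ_{j,k}`, each contributing at most
`c_ψ² 2^j`, so the proxy is `O(n)` as long as `2^j ≤ n`. A union bound over the fewer than
`2^{j*+1}` pairs `(j, k)` gives `2^{j*+1} · 2 e^{-2Cx}` with `x = n η² 2^{-j*}`; the factor `2`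
is absorbed by halving the exponent, since the claimed bound exceeds `1` unless `e^{-Cx} ≤ 1/2`.
-/

open MeasureTheory ProbabilityTheory
open scoped NNReal ENNReal

section SubGaussian

variable {Ω : Type*} [MeasurableSpace Ω] {μ : Measure Ω}

lemma ProbabilityTheory.HasSubgaussianMGF.mono {X : Ω → ℝ} {c d : ℝ≥0}
    (h : HasSubgaussianMGF X c μ) (hcd : c ≤ d) : HasSubgaussianMGF X d μ where
  integrable_exp_mul := h.integrable_exp_mul
  mgf_le t := (h.mgf_le t).trans (Real.exp_le_exp.2 (by gcongr))

lemma ProbabilityTheory.hasSubgaussianMGF_of_abs_le_of_integral_eq_zero [IsProbabilityMeasure μ]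
    {X : Ω → ℝ} {M : ℝ} (hX : AEMeasurable X μ) (hbdd : ∀ᵐ ω ∂μ, |X ω| ≤ M) (hmean : μ[X] = 0) :
    HasSubgaussianMGF X (‖M‖₊ ^ 2) μ := by
  have hparam : (‖M - -M‖₊ / 2) ^ 2 = ‖M‖₊ ^ 2 := by
    rw [sub_neg_eq_add, ← two_mul, nnnorm_mul, Real.nnnorm_ofNat,
      mul_div_cancel_left₀ _ two_ne_zero]
  rw [← hparam]
  exact hasSubgaussianMGF_of_mem_Icc_of_integral_eq_zero hX (hbdd.mono fun ω h ↦ abs_le.1 h) hmean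

theorem measure_sq_sum_mul_ge_le_of_iIndepFun [IsProbabilityMeasure μ] {ι : Type*} [Fintype ι]
    {ε : ι → Ω → ℝ} {M : ℝ} (hmeas : ∀ i, Measurable (ε i)) (hindep : iIndepFun ε μ)
    (hmean : ∀ i, μ[ε i] = 0) (hbdd : ∀ i, ∀ᵐ ω ∂μ, |ε i ω| ≤ M) (w : ι → ℝ) {B t : ℝ}
    (hB : M ^ 2 * ∑ i, w i ^ 2 ≤ B) (ht : 0 ≤ t) :
    μ {ω | t ≤ (∑ i, ε i ω * w i) ^ 2} ≤ ENNReal.ofReal (2 * Real.exp (-t / (2 * B))) := by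
  have hsummand := fun i (_ : i ∈ Finset.univ) ↦
    ((hasSubgaussianMGF_of_abs_le_of_integral_eq_zero (hmeas i).aemeasurable (hbdd i)
      (hmean i)).const_mul (w i)).congr (ae_of_all _ fun ω ↦ mul_comm (w i) (ε i ω))
  have hsum : HasSubgaussianMGF (fun ω ↦ ∑ i, ε i ω * w i) B.toNNReal μ := by
    refine (HasSubgaussianMGF.sum_of_iIndepFun
      (hindep.comp (fun i y ↦ y * w i) fun i ↦ measurable_mul_const _) hsummand).mono ?_
    rw [← NNReal.coe_le_coe, Real.coe_toNNReal']
    refine le_max_of_le_left (le_of_eq_of_le ?_ hB)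
    push_cast
    rw [Finset.mul_sum]
    refine Finset.sum_congr rfl fun i _ ↦ ?_
    show w i ^ 2 * ((‖M‖₊ ^ 2 : ℝ≥0) : ℝ) = _
    rw [NNReal.coe_pow, coe_nnnorm, Real.norm_eq_abs, sq_abs, mul_comm]
  have hB0 : 0 ≤ B := (mul_nonneg (sq_nonneg M) (Finset.sum_nonneg fun i _ ↦ sq_nonneg _)).trans hB
  have htail : ∀ {S : Ω → ℝ}, HasSubgaussianMGF S B.toNNReal μ →
      μ {ω | √t ≤ S ω} ≤ ENNReal.ofReal (Real.exp (-t / (2 * B))) := fun hS ↦ by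
    rw [← ofReal_measureReal]
    refine ENNReal.ofReal_le_ofReal ((hS.measure_ge_le (Real.sqrt_nonneg t)).trans_eq ?_)
    rw [Real.sq_sqrt ht, Real.coe_toNNReal _ hB0]
  calc μ {ω | t ≤ (∑ i, ε i ω * w i) ^ 2}
      ≤ μ ({ω | √t ≤ ∑ i, ε i ω * w i} ∪ {ω | √t ≤ -∑ i, ε i ω * w i}) := by
        refine measure_mono fun ω hω ↦ ?_
        rw [Set.mem_union, Set.mem_ofPred_eq, Set.mem_ofPred_eq, ← le_abs, ← Real.sqrt_sq_eq_abs]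
        exact Real.sqrt_le_sqrt hω
    _ ≤ ENNReal.ofReal (Real.exp (-t / (2 * B))) + ENNReal.ofReal (Real.exp (-t / (2 * B))) :=
        (measure_union_le _ _).trans (add_le_add (htail hsum) (htail hsum.neg))
    _ = ENNReal.ofReal (2 * Real.exp (-t / (2 * B))) := by
        rw [← ENNReal.ofReal_add (Real.exp_pos _).le (Real.exp_pos _).le, ← two_mul]

end SubGaussian

lemma card_le_of_forall_intCast_mem_Icc {s : Finset ℤ} {x ℓ : ℝ} (hℓ : 0 ≤ ℓ)
    (hs : ∀ k ∈ s, (k : ℝ) ∈ Set.Icc x (x + ℓ)) : (s.card : ℝ) ≤ ℓ + 1 := by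
  have hsub : s ⊆ Finset.Icc ⌈x⌉ ⌊x + ℓ⌋ := fun k hk ↦
    Finset.mem_Icc.2 ⟨Int.ceil_le.2 (hs k hk).1, Int.le_floor.2 (hs k hk).2⟩
  calc (s.card : ℝ) ≤ ((⌊x + ℓ⌋ + 1 - ⌈x⌉).toNat : ℤ) := by
        exact_mod_cast (Finset.card_le_card hsub).trans_eq (Int.card_Icc _ _)
    _ = max ((⌊x + ℓ⌋ + 1 - ⌈x⌉ : ℤ) : ℝ) 0 := by
        rw [Int.toNat_eq_max]; push_cast; rfl
    _ ≤ ℓ + 1 := by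
        refine max_le ?_ (by linarith)
        push_cast
        linarith [Int.floor_le (x + ℓ), Int.le_ceil x]

lemma sum_sq_sample_le_of_support_subset {f : ℝ → ℝ} {A L b : ℝ} (n : ℕ) (hL : 0 ≤ L)
    (hsupp : Function.support f ⊆ Set.Icc A (A + L)) (hb : ∀ x, |f x| ≤ b) :
    ∑ i : Fin n, f (((i : ℕ) + 1) / (n : ℝ)) ^ 2 ≤ (n * L + 1) * b ^ 2 := by
  classical
  set g : Fin n → ℝ := fun i ↦ f (((i : ℕ) + 1) / (n : ℝ))
  set T := Finset.univ.filter fun i ↦ g i ≠ 0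
  have hcard : (T.card : ℝ) ≤ n * L + 1 := by
    rw [← Finset.card_image_of_injective T (fun i j h ↦ Fin.ext (by simpa using h) :
      Function.Injective fun i : Fin n ↦ ((i : ℕ) : ℤ) + 1)]
    refine card_le_of_forall_intCast_mem_Icc (x := n * A) (by positivity) ?_
    simp only [Finset.mem_image, Finset.mem_filter, T]
    rintro _ ⟨i, ⟨-, hi⟩, rfl⟩
    have hn : (0 : ℝ) < n := by exact_mod_cast i.pos
    obtain ⟨h₁, h₂⟩ := hsupp hi
    rw [le_div_iff₀ hn] at h₁
    rw [div_le_iff₀ hn] at h₂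
    push_cast
    constructor <;> nlinarith
  calc ∑ i, g i ^ 2 = ∑ i ∈ T, g i ^ 2 :=
        (Finset.sum_filter_of_ne fun i _ h ↦ by simpa using h).symm
    _ ≤ T.card * b ^ 2 := by
        rw [← nsmul_eq_mul]
        refine Finset.sum_le_card_nsmul _ _ _ fun i _ ↦ ?_
        rw [← sq_abs]
        exact pow_le_pow_left₀ (abs_nonneg _) (hb _) 2
    _ ≤ (n * L + 1) * b ^ 2 := by gcongr

lemma sum_sq_sample_le_of_dyadic_support {f : ℝ → ℝ} {N : ℕ} {c : ℝ} {j n : ℕ} (hjn : 2 ^ j ≤ n)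
    (hsupp : ∃ A, Function.support f ⊆ Set.Icc A (A + N * (2 : ℝ) ^ (-(j : ℝ))))
    (hf : ∀ x, |f x| ≤ c * (2 : ℝ) ^ ((j : ℝ) / 2)) :
    ∑ i : Fin n, f (((i : ℕ) + 1) / (n : ℝ)) ^ 2 ≤ c ^ 2 * (N + 1) * n := by
  obtain ⟨A, hA⟩ := hsupp
  have hpow : ((2 : ℝ) ^ ((j : ℝ) / 2)) ^ 2 = 2 ^ j := by
    rw [← Real.rpow_natCast, ← Real.rpow_mul zero_le_two]
    norm_num
  have hinv : (2 : ℝ) ^ (-(j : ℝ)) * 2 ^ j = 1 := by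
    rw [Real.rpow_neg zero_le_two, Real.rpow_natCast, inv_mul_cancel₀ (by positivity)]
  have hjn' : (2 : ℝ) ^ j ≤ n := by exact_mod_cast hjn
  calc _ ≤ (n * (N * (2 : ℝ) ^ (-(j : ℝ))) + 1) * (c * (2 : ℝ) ^ ((j : ℝ) / 2)) ^ 2 :=
        sum_sq_sample_le_of_support_subset n (by positivity) hA hf
    _ = c ^ 2 * (n * N * ((2 : ℝ) ^ (-(j : ℝ)) * 2 ^ j) + 2 ^ j) := by rw [mul_pow, hpow]; ring
    _ ≤ c ^ 2 * (N + 1) * n := by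
        rw [hinv]
        nlinarith [sq_nonneg c]

lemma measure_exists_dyadic_index_le {Ω : Type*} [MeasurableSpace Ω] {μ : Measure Ω}
    {A : ℕ → ℕ → Set Ω} {j₀ J : ℕ} {b : ℝ≥0∞}
    (h : ∀ j, j₀ ≤ j → j ≤ J → ∀ k < 2 ^ j, μ (A j k) ≤ b) :
    μ {ω | ∃ j, j₀ ≤ j ∧ j ≤ J ∧ ∃ k < 2 ^ j, ω ∈ A j k} ≤ 2 ^ (J + 1) * b := by
  set pairs := (Finset.Icc j₀ J).sigma fun j ↦ Finset.range (2 ^ j)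
  have hcover : {ω | ∃ j, j₀ ≤ j ∧ j ≤ J ∧ ∃ k < 2 ^ j, ω ∈ A j k} ⊆
      ⋃ p ∈ pairs, A p.1 p.2 := by
    rintro ω ⟨j, hj₀, hjJ, k, hk, hω⟩
    exact Set.mem_biUnion (x := ⟨j, k⟩) (by simp [pairs, hj₀, hjJ, hk]) hω
  have hcard : pairs.card ≤ 2 ^ (J + 1) := by
    simp only [pairs, Finset.card_sigma, Finset.card_range]
    refine (Nat.geomSum_lt le_rfl fun j hj ↦ ?_).le
    exact Nat.lt_succ_of_le (Finset.mem_Icc.1 hj).2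
  calc _ ≤ ∑ p ∈ pairs, μ (A p.1 p.2) := (measure_mono hcover).trans (measure_biUnion_finset_le _ _)
    _ ≤ pairs.card * b := by
        rw [← nsmul_eq_mul]
        refine Finset.sum_le_card_nsmul _ _ _ fun p hp ↦ ?_
        simp only [pairs, Finset.mem_sigma, Finset.mem_Icc, Finset.mem_range] at hp
        exact h _ hp.1.1 hp.1.2 _ hp.2
    _ ≤ 2 ^ (J + 1) * b := by gcongr; exact_mod_cast hcard

lemma min_one_mul_two_mul_sq_le {r u : ℝ} (hr : 2 ≤ r) (hu : 0 ≤ u) :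
    min 1 (r * (2 * u ^ 2)) ≤ r * u := by
  rcases le_or_gt u (1 / 2) with hu2 | hu2
  · have : 2 * u ^ 2 ≤ u := by nlinarith
    exact min_le_of_right_le (by gcongr)
  · exact min_le_of_left_le (by nlinarith)

/-- **Bernstein deviation bound for the supremum of the low-resolution noise
coefficients.** With `B_{j,k} = (1/n)∑ ε_i ψ_{j,k}(i/n)` built from
independent, centered noise variables bounded by `M`, there is `C > 0`
depending only on `M`, `N`, `c_ψ` such that for every `j*` with `j₀ ≤ j*` and
`2^{j*} ≤ n`, and every `0 < η ≤ 1`,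
`P(2^{j*+1}·sup_{j₀ ≤ j ≤ j*, k < 2^j} B_{j,k}² ≥ η²) ≤ 2^{j*+1}·exp(−C·n·η²·2^{−j*})`. -/
theorem noise_sup_bernstein_bound (M cψ : ℝ) (N : ℕ) (hM : 0 < M) (hcψ : 0 < cψ) :
    ∃ C : ℝ, 0 < C ∧
      ∀ (j₀ : ℕ)
        (Ω : Type) (_mΩ : MeasurableSpace Ω) (P : Measure Ω) (_hP : IsProbabilityMeasure P)
        (n : ℕ) (_hn : 1 ≤ n) (ε : Fin n → Ω → ℝ)
        (_hmeas : ∀ i, Measurable (ε i))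
        (_hindep : iIndepFun ε P)
        (_hmean : ∀ i, ∫ ω, ε i ω ∂P = 0)
        (_hbdd : ∀ i, ∀ᵐ ω ∂P, |ε i ω| ≤ M)
        (ψ : ℕ → ℕ → ℝ → ℝ)
        (_hsm : ∀ j, j₀ ≤ j → ∀ k < 2 ^ j, ContDiff ℝ 1 (ψ j k))
        (_hsupp : ∀ j, j₀ ≤ j → ∀ k < 2 ^ j, ∃ a : ℝ,
          ∀ x : ℝ, ψ j k x ≠ 0 → x ∈ Set.Icc a (a + (N : ℝ) * (2 : ℝ) ^ (-(j : ℝ))))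
        (_hψ : ∀ j, j₀ ≤ j → ∀ k < 2 ^ j, ∀ x : ℝ,
          |ψ j k x| ≤ cψ * (2 : ℝ) ^ ((j : ℝ) / 2))
        (js : ℕ) (_hjs : j₀ ≤ js) (_hjsn : 2 ^ js ≤ n)
        (η : ℝ) (_hη0 : 0 < η) (_hη1 : η ≤ 1),
        P {ω | ∃ j, j₀ ≤ j ∧ j ≤ js ∧ ∃ k < 2 ^ j,
              η ^ 2 ≤ (2 : ℝ) ^ (js + 1) *
                ((1 / (n : ℝ)) * ∑ i : Fin n, ε i ω * ψ j k (((i : ℕ) + 1) / (n : ℝ))) ^ 2} ≤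
          ENNReal.ofReal
            ((2 : ℝ) ^ (js + 1) * Real.exp (-C * n * η ^ 2 * (2 : ℝ) ^ (-(js : ℝ)))) := by
  set K := M ^ 2 * cψ ^ 2 * (N + 1)
  refine ⟨1 / (8 * K), by positivity, ?_⟩
  set C := 1 / (8 * K)
  intro j₀ Ω _ P _ n hn ε hmeas hindep hmean hbdd ψ _ hsupp hψ js _ hjsn η _ _
  have hn0 : (0 : ℝ) < n := by exact_mod_cast hn
  set t : ℝ := n ^ 2 * η ^ 2 / 2 ^ (js + 1)
  set u := Real.exp (-C * n * η ^ 2 * (2 : ℝ) ^ (-(js : ℝ)))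
  have hevent : ∀ s : ℝ, η ^ 2 ≤ (2 : ℝ) ^ (js + 1) * ((1 / (n : ℝ)) * s) ^ 2 ↔ t ≤ s ^ 2 := by
    intro s
    rw [div_le_iff₀ (by positivity), mul_pow, one_div, inv_pow, ← le_div_iff₀' (by positivity),
      ← div_le_iff₀' (by positivity)]
    field_simp
  have hexponent : -t / (2 * (K * n)) = -C * n * η ^ 2 * (2 : ℝ) ^ (-(js : ℝ)) +
      -C * n * η ^ 2 * (2 : ℝ) ^ (-(js : ℝ)) := by
    rw [Real.rpow_neg zero_le_two, Real.rpow_natCast]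
    simp only [t, C, pow_succ]
    field_simp
    ring
  have hcoef : ∀ j, j₀ ≤ j → j ≤ js → ∀ k < 2 ^ j,
      P {ω | t ≤ (∑ i : Fin n, ε i ω * ψ j k (((i : ℕ) + 1) / (n : ℝ))) ^ 2} ≤
        ENNReal.ofReal (2 * u ^ 2) := by
    intro j hj₀ hj k hk
    have hsq := sum_sq_sample_le_of_dyadic_support ((Nat.pow_le_pow_right two_pos hj).trans hjsn)
      (hsupp j hj₀ k hk) (hψ j hj₀ k hk)
    refine (measure_sq_sum_mul_ge_le_of_iIndepFun hmeas hindep hmean hbdd _ (B := K * n) ?_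
      (by positivity)).trans_eq ?_
    · calc _ ≤ M ^ 2 * (cψ ^ 2 * (N + 1) * n) := by gcongr
        _ = K * n := by ring
    · rw [hexponent, Real.exp_add, ← sq]
  simp_rw [hevent]
  calc _ ≤ ENNReal.ofReal (min 1 ((2 : ℝ) ^ (js + 1) * (2 * u ^ 2))) := by
        rw [ENNReal.ofReal_min, ENNReal.ofReal_one, ENNReal.ofReal_mul (by positivity),
          ENNReal.ofReal_pow zero_le_two, ENNReal.ofReal_ofNat]
        exact le_min prob_le_one (measure_exists_dyadic_index_le hcoef)
    _ ≤ _ := ENNReal.ofReal_le_ofReal <| min_one_mul_two_mul_sq_le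
        (le_self_pow₀ one_le_two (Nat.succ_ne_zero js)) (Real.exp_pos _).le
end
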